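/- arXiv:math/9811128 — 6 statements merged into one kernel-verified Lean document; each statement's English description precedes it below -/
import Mathlib

section
/- The matrices sigma and sigmabar are mutually inverse: sigma * sigmabar = sigmabar * sigma = I16, the 16x16 identity matrix over R. -/
open Matrix Kronecker

/-- The elementary 16×16 matrix with entry `v` in row `(a,b)` and column `(c,d)`,
rows and columns indexed by `Fin 4 × Fin 4` (Kronecker product convention;
the index `i ∈ {1,…,4}` of the paper corresponds to `i - 1 ∈ Fin 4`). -/
def lgE {R : Type*} [CommRing R] (a b c d : Fin 4) (v : R) :
    Matrix (Fin 4 × Fin 4) (Fin 4 × Fin 4) R :=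
  Matrix.single (a, b) (c, d) v

/-- The Links–Gould braiding `σ`, where `qi, pi` denote the inverses of `q, p`
and `Y ^ 2 = p⁻² - q² + p²q² - 1`. -/
def LGsigma {R : Type*} [CommRing R] (q p qi pi Y : R) :
    Matrix (Fin 4 × Fin 4) (Fin 4 × Fin 4) R :=
  lgE 0 0 0 0 (pi ^ 2)
    + lgE 0 1 1 0 pi + lgE 1 0 0 1 pi + lgE 0 2 2 0 pi + lgE 2 0 0 2 pi
    + lgE 0 3 3 0 1 + lgE 3 0 0 3 1
    + lgE 1 0 1 0 (pi ^ 2 - 1) + lgE 2 0 2 0 (pi ^ 2 - 1)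
    + lgE 1 1 1 1 (-1) + lgE 2 2 2 2 (-1)
    + lgE 1 2 1 2 (q ^ 2 - 1)
    + lgE 1 2 2 1 (-q) + lgE 2 1 1 2 (-q)
    + lgE 1 2 3 0 (-(q * Y)) + lgE 3 0 1 2 (-(q * Y))
    + lgE 2 1 3 0 Y + lgE 3 0 2 1 Y
    + lgE 3 0 3 0 (Y ^ 2)
    + lgE 1 3 3 1 (p * q) + lgE 3 1 1 3 (p * q)
    + lgE 2 3 3 2 (p * q) + lgE 3 2 2 3 (p * q)
    + lgE 3 1 3 1 (p ^ 2 * q ^ 2 - 1) + lgE 3 2 3 2 (p ^ 2 * q ^ 2 - 1)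
    + lgE 3 3 3 3 (p ^ 2 * q ^ 2)

/-- The matrix `σ̄` (the inverse braiding). -/
def LGsigmabar {R : Type*} [CommRing R] (q p qi pi Y : R) :
    Matrix (Fin 4 × Fin 4) (Fin 4 × Fin 4) R :=
  lgE 0 0 0 0 (p ^ 2)
    + lgE 0 1 0 1 (p ^ 2 - 1) + lgE 0 2 0 2 (p ^ 2 - 1)
    + lgE 0 1 1 0 p + lgE 1 0 0 1 p + lgE 0 2 2 0 p + lgE 2 0 0 2 p
    + lgE 0 3 0 3 (Y ^ 2 * qi ^ 2)
    + lgE 0 3 1 2 (Y * qi) + lgE 1 2 0 3 (Y * qi)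
    + lgE 0 3 2 1 (-(Y * qi ^ 2)) + lgE 2 1 0 3 (-(Y * qi ^ 2))
    + lgE 0 3 3 0 1 + lgE 3 0 0 3 1
    + lgE 1 1 1 1 (-1) + lgE 2 2 2 2 (-1)
    + lgE 1 2 2 1 (-qi) + lgE 2 1 1 2 (-qi)
    + lgE 2 1 2 1 (qi ^ 2 - 1)
    + lgE 1 3 1 3 (pi ^ 2 * qi ^ 2 - 1) + lgE 2 3 2 3 (pi ^ 2 * qi ^ 2 - 1)
    + lgE 1 3 3 1 (pi * qi) + lgE 3 1 1 3 (pi * qi)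
    + lgE 2 3 3 2 (pi * qi) + lgE 3 2 2 3 (pi * qi)
    + lgE 3 3 3 3 (pi ^ 2 * qi ^ 2)

/-- The diagonal matrix `D = diag(p², -p²q², -p², p²q²)`, as a function on `Fin 4`. -/
def LGD {R : Type*} [CommRing R] (q p : R) : Fin 4 → R :=
  ![p ^ 2, -(p ^ 2 * q ^ 2), -(p ^ 2), p ^ 2 * q ^ 2]

/-- Quantum closure of the second strand of a two-strand tensor. -/
def lgcl2 {R : Type*} [CommRing R] (D : Fin 4 → R)
    (M : Matrix (Fin 4 × Fin 4) (Fin 4 × Fin 4) R) : Matrix (Fin 4) (Fin 4) R :=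
  Matrix.of fun y x => ∑ a : Fin 4, M (y, a) (x, a) * D a

/-- Quantum closure of the second and third strands of a three-strand tensor. -/
def lgcl3 {R : Type*} [CommRing R] (D : Fin 4 → R)
    (M : Matrix (Fin 4 × Fin 4 × Fin 4) (Fin 4 × Fin 4 × Fin 4) R) :
    Matrix (Fin 4) (Fin 4) R :=
  Matrix.of fun y x => ∑ a : Fin 4, ∑ b : Fin 4, M (y, a, b) (x, a, b) * D a * D b

/-- Quantum closure of the second, third and fourth strands of a four-strand tensor. -/
def lgcl4 {R : Type*} [CommRing R] (D : Fin 4 → R)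
    (M : Matrix (Fin 4 × Fin 4 × Fin 4 × Fin 4) (Fin 4 × Fin 4 × Fin 4 × Fin 4) R) :
    Matrix (Fin 4) (Fin 4) R :=
  Matrix.of fun y x =>
    ∑ a : Fin 4, ∑ b : Fin 4, ∑ c : Fin 4, M (y, a, b, c) (x, a, b, c) * D a * D b * D c

/-- `S ⊗ I₄` acting on the first two of three strands (Kronecker product,
reindexed along the canonical associativity equivalence). -/
def lgB1 {R : Type*} [CommRing R] (S : Matrix (Fin 4 × Fin 4) (Fin 4 × Fin 4) R) :
    Matrix (Fin 4 × Fin 4 × Fin 4) (Fin 4 × Fin 4 × Fin 4) R :=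
  Matrix.reindex (Equiv.prodAssoc (Fin 4) (Fin 4) (Fin 4))
    (Equiv.prodAssoc (Fin 4) (Fin 4) (Fin 4)) (S ⊗ₖ (1 : Matrix (Fin 4) (Fin 4) R))

/-- `I₄ ⊗ S` acting on the last two of three strands. -/
def lgB2 {R : Type*} [CommRing R] (S : Matrix (Fin 4 × Fin 4) (Fin 4 × Fin 4) R) :
    Matrix (Fin 4 × Fin 4 × Fin 4) (Fin 4 × Fin 4 × Fin 4) R :=
  (1 : Matrix (Fin 4) (Fin 4) R) ⊗ₖ S

/-- `S ⊗ I₁₆` acting on the first two of four strands. -/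
def lgC1 {R : Type*} [CommRing R] (S : Matrix (Fin 4 × Fin 4) (Fin 4 × Fin 4) R) :
    Matrix (Fin 4 × Fin 4 × Fin 4 × Fin 4) (Fin 4 × Fin 4 × Fin 4 × Fin 4) R :=
  Matrix.reindex (Equiv.prodAssoc (Fin 4) (Fin 4) (Fin 4 × Fin 4))
    (Equiv.prodAssoc (Fin 4) (Fin 4) (Fin 4 × Fin 4))
    (S ⊗ₖ (1 : Matrix (Fin 4 × Fin 4) (Fin 4 × Fin 4) R))

/-- `I₄ ⊗ S ⊗ I₄` acting on the middle two of four strands. -/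
def lgC2 {R : Type*} [CommRing R] (S : Matrix (Fin 4 × Fin 4) (Fin 4 × Fin 4) R) :
    Matrix (Fin 4 × Fin 4 × Fin 4 × Fin 4) (Fin 4 × Fin 4 × Fin 4 × Fin 4) R :=
  (1 : Matrix (Fin 4) (Fin 4) R) ⊗ₖ lgB1 S

/-- `I₁₆ ⊗ S` acting on the last two of four strands. -/
def lgC3 {R : Type*} [CommRing R] (S : Matrix (Fin 4 × Fin 4) (Fin 4 × Fin 4) R) :
    Matrix (Fin 4 × Fin 4 × Fin 4 × Fin 4) (Fin 4 × Fin 4 × Fin 4 × Fin 4) R :=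
  (1 : Matrix (Fin 4) (Fin 4) R) ⊗ₖ lgB2 S

/-! Multiplying out `σ σ̄` as a sum of products of elementary matrices, every coefficient of the
result is an identity of Laurent polynomials in `q` and `p`, the terms involving `Y` cancelling.
A one-sided inverse of a square matrix over a commutative ring is two-sided, whence `σ̄ σ = 1`. -/

section

variable {R : Type*} [CommRing R]

theorem lgE_eq_smul_single (a b c d : Fin 4) (v : R) :
    lgE a b c d v = v • Matrix.single (a, b) (c, d) 1 := by
  simp [lgE]

theorem lgE_mul_lgE (a b c d e f g h : Fin 4) (u v : R) :
    lgE a b c d u * lgE e f g h v = if c = e ∧ d = f then lgE a b g h (u * v) else 0 := by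
  unfold lgE
  split_ifs with hcd
  · obtain ⟨rfl, rfl⟩ := hcd
    exact Matrix.single_mul_single_same _ _ _ _ _
  · exact Matrix.single_mul_single_of_ne _ _ _ _ (by simpa using hcd) _

theorem one_eq_sum_lgE :
    (1 : Matrix (Fin 4 × Fin 4) (Fin 4 × Fin 4) R) = ∑ a, ∑ b, lgE a b a b 1 := by
  rw [← Matrix.sum_single_one, Fintype.sum_prod_type]
  rfl

theorem LGsigma_mul_LGsigmabar {q p qi pi : R} (Y : R) (hq : q * qi = 1) (hp : p * pi = 1) :
    LGsigma q p qi pi Y * LGsigmabar q p qi pi Y = 1 := by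
  rw [LGsigma, LGsigmabar, one_eq_sum_lgE]
  simp only [Fin.sum_univ_four, mul_add, add_mul, lgE_mul_lgE]
  simp only [Fin.reduceEq, and_true, and_false, and_self, ite_true, ite_false, add_zero, zero_add]
  simp only [lgE_eq_smul_single]
  match_scalars <;> grind

end

theorem LG_sigma_sigmabar_inverse_general (R : Type*) [CommRing R] (q p qi pi Y : R)
    (hq : q * qi = 1) (hp : p * pi = 1) :
    LGsigma q p qi pi Y * LGsigmabar q p qi pi Y = 1 ∧
      LGsigmabar q p qi pi Y * LGsigma q p qi pi Y = 1 := by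
  have h := LGsigma_mul_LGsigmabar Y hq hp
  exact ⟨h, mul_eq_one_comm.mp h⟩

/-- `σ` and `σ̄` are mutually inverse 16×16 matrices. -/
theorem LG_sigma_sigmabar_inverse (R : Type*) [CommRing R] (q p qi pi Y : R)
    (hq : q * qi = 1) (hp : p * pi = 1)
    (hY : Y ^ 2 = pi ^ 2 - q ^ 2 + p ^ 2 * q ^ 2 - 1) :
    LGsigma q p qi pi Y * LGsigmabar q p qi pi Y = 1 ∧
      LGsigmabar q p qi pi Y * LGsigma q p qi pi Y = 1 :=
  LG_sigma_sigmabar_inverse_general R q p qi pi Y hq hp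
end

section
/- Positive curl removal (first Reidemeister move for a positive kink): cl(sigma) = I4, the 4x4 identity matrix over R. -/
open Matrix Kronecker

/-!
Only the entries `σ[(y,a),(x,a)]` enter `cl(σ)`. Since `σ` preserves weights and the four basis
vectors have distinct weights, every term of `σ` that changes the first index also changes the
second, so `cl(σ)` is diagonal. Each diagonal entry is a sum of at most four terms, which collapses
to `1` using `p p⁻¹ = 1` and the relation defining `Y`.
-/

section SingleProd

variable {α β R : Type*} [DecidableEq α] [DecidableEq β] [Zero R]

theorem Matrix.single_prod_apply_of_snd_ne {b d : β} (h : b ≠ d) (a c y x : α) (v : R)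
    (e : β) : single (a, b) (c, d) v (y, e) (x, e) = 0 :=
  single_apply_of_ne _ _ _ _ _ fun ⟨hb, hd⟩ =>
    h <| (Prod.ext_iff.1 hb).2.trans (Prod.ext_iff.1 hd).2.symm

theorem Matrix.single_prod_apply_of_fst_ne {y x : α} (h : y ≠ x) (a : α) (b d : β) (v : R)
    (e : β) : single (a, b) (a, d) v (y, e) (x, e) = 0 :=
  single_apply_of_ne _ _ _ _ _ fun ⟨hb, hd⟩ =>
    h <| (Prod.ext_iff.1 hb).1.symm.trans (Prod.ext_iff.1 hd).1

end SingleProd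

section LinksGould

variable {R : Type*} [CommRing R] {q p qi pi Y : R}

theorem LGsigma_apply_of_fst_ne {y x : Fin 4} (h : y ≠ x) (a : Fin 4) :
    LGsigma q p qi pi Y (y, a) (x, a) = 0 := by
  simp only [LGsigma, lgE, Matrix.add_apply, single_prod_apply_of_fst_ne h,
    single_prod_apply_of_snd_ne, ne_eq, Fin.reduceEq, not_false_eq_true, add_zero]

theorem lgcl2_LGsigma_apply_of_ne {y x : Fin 4} (h : y ≠ x) :
    lgcl2 (LGD q p) (LGsigma q p qi pi Y) y x = 0 := by
  simp [lgcl2, LGsigma_apply_of_fst_ne h]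

theorem lgcl2_LGsigma_apply_self (hp : p * pi = 1)
    (hY : Y ^ 2 = pi ^ 2 - q ^ 2 + p ^ 2 * q ^ 2 - 1) (y : Fin 4) :
    lgcl2 (LGD q p) (LGsigma q p qi pi Y) y y = 1 := by
  have hp2 : pi ^ 2 * p ^ 2 = 1 := by rw [← mul_pow, mul_comm, hp, one_pow]
  fin_cases y <;>
    simp only [lgcl2, of_apply, Fin.sum_univ_four, LGD, LGsigma, lgE, Matrix.add_apply,
      single_apply, Prod.mk.injEq, Fin.isValue, Fin.reduceEq, Fin.zero_eta, Fin.mk_one,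
      Fin.reduceFinMk, and_true, and_false, false_and, and_self, ↓reduceIte, cons_val_zero,
      cons_val_one, cons_val, add_zero, zero_add, zero_mul]
  · exact hp2
  · linear_combination hp2
  · linear_combination hp2
  · linear_combination hp2 + p ^ 2 * hY

end LinksGould

theorem LG_positive_curl_general (R : Type*) [CommRing R] (q p qi pi Y : R)
    (hp : p * pi = 1)
    (hY : Y ^ 2 = pi ^ 2 - q ^ 2 + p ^ 2 * q ^ 2 - 1) :
    lgcl2 (LGD q p) (LGsigma q p qi pi Y) = 1 := by
  ext y x
  rcases eq_or_ne y x with rfl | h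
  · rw [lgcl2_LGsigma_apply_self hp hY, one_apply_eq]
  · rw [lgcl2_LGsigma_apply_of_ne h, one_apply_ne h]

/-- positive curl removal: the quantum closure of the second strand
of `σ` is the 4×4 identity matrix. -/
theorem LG_positive_curl (R : Type*) [CommRing R] (q p qi pi Y : R)
    (hq : q * qi = 1) (hp : p * pi = 1)
    (hY : Y ^ 2 = pi ^ 2 - q ^ 2 + p ^ 2 * q ^ 2 - 1) :
    lgcl2 (LGD q p) (LGsigma q p qi pi Y) = 1 :=
  LG_positive_curl_general R q p qi pi Y hp hY
end

section
/- Negative curl removal (first Reidemeister move for a negative kink): cl(sigmabar) = I4, the 4x4 identity matrix over R. Consequently the Links-Gould state model needs no writhe normalisation. -/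
open Matrix Kronecker

/-! Only the entries `(y, a), (y, a)` of `σ̄` survive the closure, so `cl(σ̄)` is diagonal and each
diagonal entry is a linear form in the weights `D`. For `D = diag(p², -p²q², -p², p²q²)` these
forms collapse to `1` once `q qi = 1`, `p pi = 1` and the defining relation of `Y²` are used. -/

section Closure

variable {R : Type*} [CommRing R] (D : Fin 4 → R)

lemma lgcl2_add (M N : Matrix (Fin 4 × Fin 4) (Fin 4 × Fin 4) R) :
    lgcl2 D (M + N) = lgcl2 D M + lgcl2 D N := by
  ext y x
  simp only [lgcl2, of_apply, Matrix.add_apply, add_mul, Finset.sum_add_distrib]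

lemma lgcl2_lgE (a b c d : Fin 4) (v : R) :
    lgcl2 D (lgE a b c d v) = if b = d then single a c (v * D b) else 0 := by
  ext y x
  split_ifs with hbd
  · subst hbd
    rw [lgcl2, of_apply, Finset.sum_eq_single b (fun e _ he => by simp [lgE, Ne.symm he])
      (by simp)]
    simp [lgE, single_apply]
  · rw [lgcl2, of_apply, Matrix.zero_apply]
    refine Finset.sum_eq_zero fun e _ => ?_
    simp only [lgE, single_apply, Prod.mk.injEq]
    rw [if_neg fun h => hbd (h.1.2.trans h.2.2.symm), zero_mul]

lemma lgcl2_LGsigmabar (q p qi pi Y : R) :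
    lgcl2 D (LGsigmabar q p qi pi Y) = diagonal ![
      p ^ 2 * D 0 + (p ^ 2 - 1) * D 1 + (p ^ 2 - 1) * D 2 + Y ^ 2 * qi ^ 2 * D 3,
      -D 1 + (pi ^ 2 * qi ^ 2 - 1) * D 3,
      -D 2 + (qi ^ 2 - 1) * D 1 + (pi ^ 2 * qi ^ 2 - 1) * D 3,
      pi ^ 2 * qi ^ 2 * D 3] := by
  simp only [LGsigmabar, lgcl2_add, lgcl2_lgE, Fin.reduceEq, if_true, if_false, add_zero]
  ext i j
  fin_cases i <;> fin_cases j <;> simp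

end Closure

/-- negative curl removal: the quantum closure of the second strand
of `σ̄` is the 4×4 identity matrix (so no writhe normalisation is needed). -/
theorem LG_negative_curl (R : Type*) [CommRing R] (q p qi pi Y : R)
    (hq : q * qi = 1) (hp : p * pi = 1)
    (hY : Y ^ 2 = pi ^ 2 - q ^ 2 + p ^ 2 * q ^ 2 - 1) :
    lgcl2 (LGD q p) (LGsigmabar q p qi pi Y) = 1 := by
  have hq2 : q ^ 2 * qi ^ 2 = 1 := by linear_combination (q * qi + 1) * hq
  have hp2 : p ^ 2 * pi ^ 2 = 1 := by linear_combination (p * pi + 1) * hp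
  have hpq : p ^ 2 * q ^ 2 * (pi ^ 2 * qi ^ 2) = 1 := by
    linear_combination p ^ 2 * pi ^ 2 * hq2 + hp2
  rw [lgcl2_LGsigmabar, ← diagonal_one]
  congr 1
  ext i
  fin_cases i <;>
    simp only [LGD, Fin.zero_eta, Fin.mk_one, Fin.reduceFinMk, Fin.isValue, cons_val_zero,
      cons_val_one, cons_val]
  · linear_combination Y ^ 2 * p ^ 2 * hq2 + p ^ 2 * hY + hp2
  · linear_combination hpq
  · linear_combination hpq - p ^ 2 * hq2
  · linear_combination hpq
end

section
/- The Links-Gould invariant of the Hopf link 2^2_1: cl(sigma^2) = (-1 + p^-2 - q^2 + p^2 q^2) I4, where sigma^2 is the matrix square of sigma and I4 is the 4x4 identity matrix over R. -/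
open Matrix Kronecker

/-! In `Fin 4` indexing, `σ` only connects basis pairs `(i, j)` and `(k, l)` with
`i + j = k + l`, and so does `σ²`; hence `σ²[(y, a), (x, a)] = 0` for `y ≠ x`, and the closure of
`σ²` is diagonal whatever the weights `D`. On the diagonal, `p π = 1` and the defining relation of
`Y` reduce each entry to `Y²`, which is the scalar `-1 + p⁻² - q² + p²q²`. -/

set_option maxHeartbeats 1000000 in
theorem lgcl2_LGsigma_sq_of_ne {R : Type*} [CommRing R] {D : Fin 4 → R} {q p qi pi Y : R}
    {y x : Fin 4} (hyx : y ≠ x) : lgcl2 D (LGsigma q p qi pi Y ^ 2) y x = 0 := by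
  fin_cases y <;> fin_cases x <;> first
    | exact absurd rfl hyx
    | simp [lgcl2, LGsigma, lgE, sq, Matrix.mul_apply, Fintype.sum_prod_type, Fin.sum_univ_four,
        Matrix.single, Prod.ext_iff]

set_option maxHeartbeats 1000000 in
theorem lgcl2_LGsigma_sq_self {R : Type*} [CommRing R] {q p qi pi Y : R} (hp : p * pi = 1)
    (hY : Y ^ 2 = pi ^ 2 - q ^ 2 + p ^ 2 * q ^ 2 - 1) (y : Fin 4) :
    lgcl2 (LGD q p) (LGsigma q p qi pi Y ^ 2) y y = Y ^ 2 := by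
  fin_cases y <;>
    simp [lgcl2, LGsigma, LGD, lgE, sq, Matrix.mul_apply, Fintype.sum_prod_type,
      Fin.sum_univ_four, Matrix.single, Prod.ext_iff]
  · linear_combination (p * pi + 1) * (pi ^ 2 - q ^ 2 - 1) * hp - hY
  · linear_combination (p * pi + 1) * (pi ^ 2 - q ^ 2 - 1) * hp - (1 + p ^ 2 * q ^ 2) * hY
  · linear_combination (p * pi + 1) * (pi ^ 2 - q ^ 2 - 1) * hp - (1 + p ^ 2 * q ^ 2) * hY
  · linear_combination (p * pi + 1) * (pi ^ 2 - q ^ 2 - 1 + 2 * p ^ 2 * q ^ 2) * hp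
      + (p ^ 2 * (Y ^ 2 + pi ^ 2 + p ^ 2 * q ^ 2) - 1) * hY

theorem LG_hopf_link_general (R : Type*) [CommRing R] (q p qi pi Y : R)
    (hp : p * pi = 1) (hY : Y ^ 2 = pi ^ 2 - q ^ 2 + p ^ 2 * q ^ 2 - 1) :
    lgcl2 (LGD q p) (LGsigma q p qi pi Y ^ 2) =
      (-1 + pi ^ 2 - q ^ 2 + p ^ 2 * q ^ 2) • (1 : Matrix (Fin 4) (Fin 4) R) := by
  have hscalar : -1 + pi ^ 2 - q ^ 2 + p ^ 2 * q ^ 2 = Y ^ 2 := by linear_combination -hY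
  rw [hscalar]
  ext y x
  rcases eq_or_ne y x with rfl | hyx
  · simp [lgcl2_LGsigma_sq_self hp hY]
  · simp [lgcl2_LGsigma_sq_of_ne hyx, hyx]

/-- the Links–Gould invariant of the Hopf link `2²₁`:
`cl(σ²) = (-1 + p⁻² - q² + p²q²) I₄`. -/
theorem LG_hopf_link (R : Type*) [CommRing R] (q p qi pi Y : R)
    (hq : q * qi = 1) (hp : p * pi = 1)
    (hY : Y ^ 2 = pi ^ 2 - q ^ 2 + p ^ 2 * q ^ 2 - 1) :
    lgcl2 (LGD q p) (LGsigma q p qi pi Y ^ 2) =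
      (-1 + pi ^ 2 - q ^ 2 + p ^ 2 * q ^ 2) • (1 : Matrix (Fin 4) (Fin 4) R) :=
  LG_hopf_link_general R q p qi pi Y hp hY
end

section
/- The Links-Gould invariant of the trefoil knot 3_1: cl(sigma^3) = (1 + p^-4 - p^-2 + 2 q^2 - p^-2 q^2 - p^2 q^2 - p^2 q^4 + p^4 q^4) I4, where sigma^3 is the matrix cube of sigma and I4 is the 4x4 identity matrix over R. -/
open Matrix Kronecker

/-! `σ` is the braiding on `V ⊗ V` for the four-dimensional representation `V` of
`U_q(gl(2|1))`, so it preserves weights. With an injective weight `lgWeight` on the basis of `V`,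
`σ` (hence `σ³`) is block diagonal with respect to the total weight on `V ⊗ V`, and an entry
`σ³[(y,a),(x,a)]` with `y ≠ x` connects different total weights; so the closure is diagonal.
The four diagonal entries are then a direct computation, using `Y² = p⁻² - q² + p²q² - 1`
and `p p⁻¹ = 1`. -/

open OrderDual Function

/-- The sums `lgWeight a + lgWeight b` take exactly nine values, one for each block of `σ`. -/
def lgWeight : Fin 4 → ℕ := ![0, 1, 3, 4]

theorem lgWeight_injective : Injective lgWeight := by
  decide

theorem LGsigma_blockTriangular {R : Type*} [CommRing R] (q p qi pi Y : R)
    {α : Type*} [Preorder α] (f : ℕ → α) :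
    (LGsigma q p qi pi Y).BlockTriangular fun i => f (lgWeight i.1 + lgWeight i.2) := by
  unfold LGsigma lgE
  repeat' apply BlockTriangular.add
  all_goals
    refine blockTriangular_single (b := fun i : Fin 4 × Fin 4 => f (lgWeight i.1 + lgWeight i.2))
      (le_of_eq (congrArg f ?_)) _
    decide

theorem lgcl2_apply_eq_zero_of_ne {R : Type*} [CommRing R] {α : Type*} [LinearOrder α] [Add α]
    [IsRightCancelAdd α] (D : Fin 4 → R) {w : Fin 4 → α} (hw : Injective w)
    {M : Matrix (Fin 4 × Fin 4) (Fin 4 × Fin 4) R}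
    (hM : M.BlockTriangular fun i => w i.1 + w i.2)
    (hM' : M.BlockTriangular fun i => toDual (w i.1 + w i.2))
    {y x : Fin 4} (hyx : y ≠ x) : lgcl2 D M y x = 0 := by
  rw [lgcl2, of_apply]
  refine Finset.sum_eq_zero fun a _ => ?_
  have hne : w y + w a ≠ w x + w a := fun h => hyx (hw (add_right_cancel h))
  rcases hne.lt_or_gt with hlt | hlt
  · rw [hM' (toDual_lt_toDual.mpr hlt), zero_mul]
  · rw [hM hlt, zero_mul]

theorem lgcl2_LGsigma_pow_three_apply_self {R : Type*} [CommRing R] {q p qi pi Y : R}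
    (hp : p * pi = 1) (hY : Y ^ 2 = pi ^ 2 - q ^ 2 + p ^ 2 * q ^ 2 - 1) (y : Fin 4) :
    lgcl2 (LGD q p) (LGsigma q p qi pi Y ^ 3) y y =
      1 + pi ^ 4 - pi ^ 2 + 2 * q ^ 2 - pi ^ 2 * q ^ 2 - p ^ 2 * q ^ 2
        - p ^ 2 * q ^ 4 + p ^ 4 * q ^ 4 := by
  fin_cases y <;>
    simp only [lgcl2, LGsigma, lgE, single, Fin.isValue, Prod.ext_iff, pow_succ, pow_zero,
      one_mul, of_add_of, Matrix.mul_apply, of_apply, Pi.add_apply, Fintype.sum_prod_type,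
      Fin.sum_univ_four, and_true, one_ne_zero, and_false, ↓reduceIte, add_zero, Fin.reduceEq,
      false_and, zero_ne_one, zero_add, true_and, mul_ite, ite_mul, zero_mul, mul_zero, mul_one,
      mul_neg, neg_neg, LGD, neg_mul, cons_val_zero, neg_zero, cons_val_one, cons_val,
      Fin.zero_eta, Fin.mk_one, Fin.reduceFinMk] <;>
    grind

theorem LG_trefoil_general (R : Type*) [CommRing R] (q p qi pi Y : R)
    (hp : p * pi = 1)
    (hY : Y ^ 2 = pi ^ 2 - q ^ 2 + p ^ 2 * q ^ 2 - 1) :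
    lgcl2 (LGD q p) (LGsigma q p qi pi Y ^ 3) =
      (1 + pi ^ 4 - pi ^ 2 + 2 * q ^ 2 - pi ^ 2 * q ^ 2 - p ^ 2 * q ^ 2
          - p ^ 2 * q ^ 4 + p ^ 4 * q ^ 4) • (1 : Matrix (Fin 4) (Fin 4) R) := by
  ext y x
  rcases eq_or_ne y x with rfl | hyx
  · rw [lgcl2_LGsigma_pow_three_apply_self hp hY, Matrix.smul_apply, one_apply_eq, smul_eq_mul,
      mul_one]
  · rw [lgcl2_apply_eq_zero_of_ne _ lgWeight_injective
      ((LGsigma_blockTriangular q p qi pi Y id).pow 3)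
      ((LGsigma_blockTriangular q p qi pi Y toDual).pow 3) hyx,
      Matrix.smul_apply, one_apply_ne hyx, smul_zero]

/-- the Links–Gould invariant of the trefoil knot `3₁`:
`cl(σ³) = (1 + p⁻⁴ - p⁻² + 2q² - p⁻²q² - p²q² - p²q⁴ + p⁴q⁴) I₄`. -/
theorem LG_trefoil (R : Type*) [CommRing R] (q p qi pi Y : R)
    (hq : q * qi = 1) (hp : p * pi = 1)
    (hY : Y ^ 2 = pi ^ 2 - q ^ 2 + p ^ 2 * q ^ 2 - 1) :
    lgcl2 (LGD q p) (LGsigma q p qi pi Y ^ 3) =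
      (1 + pi ^ 4 - pi ^ 2 + 2 * q ^ 2 - pi ^ 2 * q ^ 2 - p ^ 2 * q ^ 2
          - p ^ 2 * q ^ 4 + p ^ 4 * q ^ 4) • (1 : Matrix (Fin 4) (Fin 4) R) :=
  LG_trefoil_general R q p qi pi Y hp hY
end

section
/- The Links-Gould polynomial of the knot 9_42, namely P = 3 + p^-8 q^-6 - 2 p^-6 q^-6 - 2 p^-6 q^-4 + p^-4 q^-6 + 3 p^-4 q^-4 + p^-4 q^-2 + p^-4 - p^-2 q^-4 - p^-2 q^-2 - 3 p^-2 - 3 p^-2 q^2 + 6 q^2 + 2 q^4 - p^2 q^-2 - p^2 - 3 p^2 q^2 - 3 p^2 q^4 + p^4 q^-2 + 3 p^4 + p^4 q^2 + p^4 q^4 - 2 p^6 - 2 p^6 q^2 + p^8 q^2 as an element of L, is not palindromic: phi(P) is not equal to P. (Hence the Links-Gould invariant detects the chirality of 9_42, which neither the HOMFLY nor the Kauffman polynomial detects.) -/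
/-- The Laurent polynomial ring `L = ℤ[q^{±1}, p^{±1}]` in two commuting
indeterminates `q, p`, realised as the group ring of `ℤ²` over `ℤ`.
The monomial `c · qᵃ pᵇ` corresponds to `single (a, b) c`. -/
abbrev LaurentL : Type := AddMonoidAlgebra ℤ (ℤ × ℤ)

/-- The monomial `c · qᵃ pᵇ` of `L`. -/
noncomputable def lmono (a b c : ℤ) : LaurentL := AddMonoidAlgebra.single (a, b) c

/-- The exponent map `(a, b) ↦ (-a, -b)` inducing the ring automorphism
`φ : q ↦ q⁻¹, p ↦ p⁻¹`. -/
def phiExp : ℤ × ℤ →+ ℤ × ℤ where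
  toFun x := (-x.1, -x.2)
  map_zero' := by simp
  map_add' x y := by simp [Prod.ext_iff]; constructor <;> ring

/-- The exponent map `(a, b) ↦ (a - b, -b)` inducing the ring automorphism
`ψ : q ↦ q, p ↦ q⁻¹p⁻¹`. -/
def psiExp : ℤ × ℤ →+ ℤ × ℤ where
  toFun x := (x.1 - x.2, -x.2)
  map_zero' := by simp
  map_add' x y := by simp [Prod.ext_iff]; constructor <;> ring

/-- The ring automorphism `φ` of `L` determined by `φ(q) = q⁻¹`, `φ(p) = p⁻¹`
(as a ring homomorphism on the group ring). -/
noncomputable def lgPhi : LaurentL →+* LaurentL := AddMonoidAlgebra.mapDomainRingHom ℤ phiExp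

/-- The ring automorphism `ψ` of `L` determined by `ψ(q) = q`, `ψ(p) = q⁻¹p⁻¹`
(as a ring homomorphism on the group ring). -/
noncomputable def lgPsi : LaurentL →+* LaurentL := AddMonoidAlgebra.mapDomainRingHom ℤ psiExp

/-- The Links–Gould polynomial of the knot `9₄₂`. -/
noncomputable def LGpoly942 : LaurentL :=
  lmono 0 0 3 + lmono (-6) (-8) 1 + lmono (-6) (-6) (-2) + lmono (-4) (-6) (-2)
    + lmono (-6) (-4) 1 + lmono (-4) (-4) 3 + lmono (-2) (-4) 1 + lmono 0 (-4) 1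
    + lmono (-4) (-2) (-1) + lmono (-2) (-2) (-1) + lmono 0 (-2) (-3) + lmono 2 (-2) (-3)
    + lmono 2 0 6 + lmono 4 0 2 + lmono (-2) 2 (-1) + lmono 0 2 (-1) + lmono 2 2 (-3)
    + lmono 4 2 (-3) + lmono (-2) 4 1 + lmono 0 4 3 + lmono 2 4 1 + lmono 4 4 1
    + lmono 0 6 (-2) + lmono 2 6 (-2) + lmono 2 8 1

lemma lgPhi_lmono (a b c : ℤ) : lgPhi (lmono a b c) = lmono (-a) (-b) c := by
  simp only [lgPhi, lmono, AddMonoidAlgebra.mapDomainRingHom_apply, AddMonoidAlgebra.single]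
  show AddMonoidAlgebra.mapDomain phiExp (AddMonoidAlgebra.single (a, b) c) = _
  rw [AddMonoidAlgebra.mapDomain_single]
  rfl

lemma lmono_apply (a b c x y : ℤ) :
    (lmono a b c).coeff (x, y) = if a = x ∧ b = y then c else 0 := by
  simp [lmono, AddMonoidAlgebra.coeff_single, Finsupp.single_apply, Prod.ext_iff]

lemma laurent_add_apply (f g : LaurentL) (x : ℤ × ℤ) : (f + g).coeff x = f.coeff x + g.coeff x := rfl

/-- the Links–Gould polynomial of `9₄₂` is not palindromic:
`φ(P) ≠ P`, hence the invariant detects the chirality of `9₄₂`. -/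
theorem LG_942_not_palindromic : lgPhi LGpoly942 ≠ LGpoly942 := by
  intro h
  have h2 := congrArg (fun f : LaurentL => f.coeff (2, 8)) h
  simp only [LGpoly942, map_add, lgPhi_lmono, laurent_add_apply, lmono_apply] at h2
  norm_num at h2
end
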